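/- arXiv:2307.15275 — 6 statements merged into one kernel-verified Lean document; each statement's English description precedes it below -/
import Mathlib

section
/- Suppose (A,B,C) has relative degree ρ with 1 ≤ ρ ≤ n. Let B̄ : Matrix (Fin (n−1)) (Fin n) 𝕜 be a matrix of rank n−1 satisfying B̄ * B = 0. Then the (n−1+ρ)×n matrix T̄ obtained by stacking B̄ on top of C̄ has rank n (full column rank). -/
open Matrix

/-- If `(A, B, C)` has relative degree `ρ` with `1 ≤ ρ ≤ n`, and
`B̄` is a matrix of rank `n - 1` with `B̄ * B = 0`, then the matrix obtained by
stacking `B̄` on top of `C̄` (whose `i`-th row is `C * A ^ i`) has full column rank `n`. -/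
theorem stmt0 {𝕜 : Type*} [Field 𝕜] {n ρ : ℕ} (hn : 1 ≤ n) (hρ : 1 ≤ ρ) (hρn : ρ ≤ n)
    (A : Matrix (Fin n) (Fin n) 𝕜) (B : Matrix (Fin n) (Fin 1) 𝕜)
    (C : Matrix (Fin 1) (Fin n) 𝕜)
    (hrd : ∀ i : ℕ, i + 2 ≤ ρ → C * A ^ i * B = 0)
    (hrd' : C * A ^ (ρ - 1) * B ≠ 0)
    (Cbar : Matrix (Fin ρ) (Fin n) 𝕜)
    (hCbar : ∀ (i : Fin ρ) (j : Fin n), Cbar i j = (C * A ^ (i : ℕ)) 0 j)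
    (Bbar : Matrix (Fin (n - 1)) (Fin n) 𝕜)
    (hBbar_rank : Bbar.rank = n - 1)
    (hBbarB : Bbar * B = 0) :
    (Matrix.fromRows Bbar Cbar).rank = n := by
  classical
  set b : Fin n → 𝕜 := fun i => B i 0 with hb
  have hbker : b ∈ LinearMap.ker Bbar.mulVecLin := by
    rw [LinearMap.mem_ker]
    ext i
    have := congrFun (congrFun hBbarB i) 0
    simpa [Matrix.mul_apply, Matrix.mulVec, dotProduct, hb] using this
  have hentry : (C * A ^ (ρ - 1) * B) 0 0 ≠ 0 := by
    intro h
    apply hrd'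
    ext i j
    fin_cases i; fin_cases j
    simpa using h
  have hbne : b ≠ 0 := by
    intro h
    apply hentry
    have hB : B = 0 := by
      ext i j
      fin_cases j
      exact congrFun h i
    simp [hB]
  -- rank-nullity for Bbar
  have hrn := LinearMap.finrank_range_add_finrank_ker Bbar.mulVecLin
  rw [Module.finrank_fintype_fun_eq_card, Fintype.card_fin] at hrn
  have hrank_def : Module.finrank 𝕜 (LinearMap.range Bbar.mulVecLin) = Bbar.rank := rfl
  rw [hrank_def, hBbar_rank] at hrn
  have hker1 : Module.finrank 𝕜 (LinearMap.ker Bbar.mulVecLin) = 1 := by omega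
  -- the kernel of Bbar is the span of b
  have hspan : Submodule.span 𝕜 {b} = LinearMap.ker Bbar.mulVecLin := by
    apply Submodule.eq_of_le_of_finrank_le
    · rw [Submodule.span_le, Set.singleton_subset_iff]; exact hbker
    · rw [hker1, finrank_span_singleton hbne]
  -- kernel of fromRows is trivial
  have hkerF : LinearMap.ker (Matrix.fromRows Bbar Cbar).mulVecLin = ⊥ := by
    rw [eq_bot_iff]
    intro x hx
    rw [LinearMap.mem_ker, Matrix.mulVecLin_apply, Matrix.fromRows_mulVec] at hx
    have hBx : Bbar.mulVec x = 0 := by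
      ext i
      exact congrFun hx (Sum.inl i)
    have hCx : Cbar.mulVec x = 0 := by
      ext i
      exact congrFun hx (Sum.inr i)
    have hxker : x ∈ LinearMap.ker Bbar.mulVecLin := by
      rw [LinearMap.mem_ker, Matrix.mulVecLin_apply]; exact hBx
    rw [← hspan, Submodule.mem_span_singleton] at hxker
    obtain ⟨c, hc⟩ := hxker
    have hidx : ρ - 1 < ρ := by omega
    have hCxr := congrFun hCx ⟨ρ - 1, hidx⟩
    have hcomp : Cbar.mulVec x ⟨ρ - 1, hidx⟩ = c * (C * A ^ (ρ - 1) * B) 0 0 := by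
      rw [← hc]
      simp only [Matrix.mulVec, dotProduct, Matrix.mul_apply, hb,
        Pi.smul_apply, smul_eq_mul]
      rw [Finset.mul_sum]
      apply Finset.sum_congr rfl
      intro j _
      rw [hCbar ⟨ρ - 1, hidx⟩ j, Matrix.mul_apply]
      ring
    rw [hcomp] at hCxr
    have hc0 : c = 0 := by
      rcases mul_eq_zero.mp hCxr with h | h
      · exact h
      · exact absurd h hentry
    simp only [Submodule.mem_bot]
    rw [← hc, hc0, zero_smul]
  -- rank-nullity for fromRows
  have hrnF := LinearMap.finrank_range_add_finrank_ker (Matrix.fromRows Bbar Cbar).mulVecLin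
  rw [Module.finrank_fintype_fun_eq_card, Fintype.card_fin, hkerF, finrank_bot] at hrnF
  have hrank_defF : Module.finrank 𝕜 (LinearMap.range (Matrix.fromRows Bbar Cbar).mulVecLin)
      = (Matrix.fromRows Bbar Cbar).rank := rfl
  rw [hrank_defF] at hrnF
  omega
end

section
/- Suppose (A,B,C) has relative degree ρ with 1 ≤ ρ ≤ n, and let B̄ : Matrix (Fin (n−1)) (Fin n) 𝕜 have rank n−1 with B̄ * B = 0. Then for every i with 0 ≤ i ≤ ρ−2 the row vector C * A^i lies in the span of the rows of B̄, while the row vector C * A^(ρ−1) does not lie in the span of the rows of B̄. -/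
/-!
The rows of `B̄` lie in the kernel of the functional `v ↦ v ⬝ᵥ B`, which is nonzero and hence
has dimension `n - 1`; having rank `n - 1`, they span all of it. So `C * A ^ i` lies in the row
span of `B̄` exactly when the Markov parameter `C * A ^ i * B` vanishes.
-/

open Matrix

namespace Matrix

variable {𝕜 : Type*} [Field 𝕜] {m n : Type*} [Fintype n]

theorem mem_span_range_iff_dotProduct_eq_zero [Finite m] {M : Matrix m n 𝕜} {b : n → 𝕜}
    (hb : b ≠ 0) (hMb : M *ᵥ b = 0) (hrank : M.rank = Fintype.card n - 1) (v : n → 𝕜) :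
    v ∈ Submodule.span 𝕜 (Set.range M) ↔ v ⬝ᵥ b = 0 := by
  classical
  let f : Module.Dual 𝕜 (n → 𝕜) := (dotProductBilin 𝕜 𝕜).flip b
  have hf : f ≠ 0 := fun h => hb (by
    ext j
    simpa [f] using LinearMap.congr_fun h (Pi.single j 1))
  have hle : Submodule.span 𝕜 (Set.range M) ≤ LinearMap.ker f := by
    rw [Submodule.span_le]
    rintro _ ⟨i, rfl⟩
    exact congrFun hMb i
  have hker := f.finrank_ker_add_one_of_ne_zero hf
  rw [Module.finrank_fintype_fun_eq_card] at hker
  have hspan : Submodule.span 𝕜 (Set.range M) = LinearMap.ker f :=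
    Submodule.eq_of_le_of_finrank_eq hle (by
      have hrow : M.rank = Module.finrank 𝕜 (Submodule.span 𝕜 (Set.range M)) :=
        M.rank_eq_finrank_span_row
      omega)
  rw [hspan]
  rfl

theorem mul_eq_zero_iff_dotProduct_eq_zero {ι κ : Type*} [Unique ι] [Unique κ]
    (M : Matrix ι n 𝕜) (N : Matrix n κ 𝕜) (i : ι) (k : κ) :
    M * N = 0 ↔ M i ⬝ᵥ Nᵀ k = 0 := by
  rw [← Matrix.ext_iff, Unique.forall_iff, Unique.forall_iff, Subsingleton.elim default i,
    Subsingleton.elim default k]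
  rfl

theorem mulVec_transpose_eq_zero_of_mul_eq_zero {κ : Type*} {M : Matrix m n 𝕜} {N : Matrix n κ 𝕜}
    (h : M * N = 0) (k : κ) : M *ᵥ Nᵀ k = 0 :=
  funext fun i => congrFun (congrFun h i) k

end Matrix

theorem stmt1_general {𝕜 : Type*} [Field 𝕜] {n ρ : ℕ}
    (A : Matrix (Fin n) (Fin n) 𝕜) (B : Matrix (Fin n) (Fin 1) 𝕜)
    (C : Matrix (Fin 1) (Fin n) 𝕜)
    (hrd : ∀ i : ℕ, i + 2 ≤ ρ → C * A ^ i * B = 0)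
    (hrd' : C * A ^ (ρ - 1) * B ≠ 0)
    (Bbar : Matrix (Fin (n - 1)) (Fin n) 𝕜)
    (hBbar_rank : Bbar.rank = n - 1)
    (hBbarB : Bbar * B = 0) :
    (∀ i : ℕ, i + 2 ≤ ρ →
      (C * A ^ i) 0 ∈ Submodule.span 𝕜 (Set.range Bbar)) ∧
    (C * A ^ (ρ - 1)) 0 ∉ Submodule.span 𝕜 (Set.range Bbar) := by
  have hlast : (C * A ^ (ρ - 1)) 0 ⬝ᵥ Bᵀ 0 ≠ 0 :=
    (mul_eq_zero_iff_dotProduct_eq_zero _ _ 0 0).not.mp hrd'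
  have hb : Bᵀ 0 ≠ 0 := fun h => hlast (by rw [h, dotProduct_zero])
  have hmem := mem_span_range_iff_dotProduct_eq_zero hb
    (mulVec_transpose_eq_zero_of_mul_eq_zero hBbarB 0) (by rwa [Fintype.card_fin])
  refine ⟨fun i hi => ?_, fun h => hlast ((hmem _).mp h)⟩
  exact (hmem _).mpr ((mul_eq_zero_iff_dotProduct_eq_zero _ _ 0 0).mp (hrd i hi))

/-- If `(A, B, C)` has relative degree `ρ` with `1 ≤ ρ ≤ n`, and
`B̄` has rank `n - 1` with `B̄ * B = 0`, then for `0 ≤ i ≤ ρ - 2` the row vector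
`C * A ^ i` lies in the span of the rows of `B̄`, while `C * A ^ (ρ - 1)` does not. -/
theorem stmt1 {𝕜 : Type*} [Field 𝕜] {n ρ : ℕ} (hn : 1 ≤ n) (hρ : 1 ≤ ρ) (hρn : ρ ≤ n)
    (A : Matrix (Fin n) (Fin n) 𝕜) (B : Matrix (Fin n) (Fin 1) 𝕜)
    (C : Matrix (Fin 1) (Fin n) 𝕜)
    (hrd : ∀ i : ℕ, i + 2 ≤ ρ → C * A ^ i * B = 0)
    (hrd' : C * A ^ (ρ - 1) * B ≠ 0)
    (Bbar : Matrix (Fin (n - 1)) (Fin n) 𝕜)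
    (hBbar_rank : Bbar.rank = n - 1)
    (hBbarB : Bbar * B = 0) :
    (∀ i : ℕ, i + 2 ≤ ρ →
      (C * A ^ i) 0 ∈ Submodule.span 𝕜 (Set.range Bbar)) ∧
    (C * A ^ (ρ - 1)) 0 ∉ Submodule.span 𝕜 (Set.range Bbar) :=
  stmt1_general A B C hrd hrd' Bbar hBbar_rank hBbarB
end

section
/- With the zero-subspace transformation and (A,B,C) of relative degree ρ, the ρ×l_z matrix A_ξη = C̄ * A * S_η has its rows 0, 1, …, ρ−2 all equal to zero, and its last row equals the 1×l_z row matrix C * A^ρ * S_η. -/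
open Matrix

/-- The matrix `A_ξη = C̄ * A * S_η` has rows `0, …, ρ-2` equal to
zero, and its last row equals `C * A ^ ρ * S_η`. -/
theorem stmt3 {𝕜 : Type*} [Field 𝕜] {n ρ : ℕ} (hn : 1 ≤ n) (hρ : 1 ≤ ρ) (hρn : ρ ≤ n)
    (A : Matrix (Fin n) (Fin n) 𝕜) (B : Matrix (Fin n) (Fin 1) 𝕜)
    (C : Matrix (Fin 1) (Fin n) 𝕜)
    (hrd : ∀ i : ℕ, i + 2 ≤ ρ → C * A ^ i * B = 0)
    (hrd' : C * A ^ (ρ - 1) * B ≠ 0)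
    (Cbar : Matrix (Fin ρ) (Fin n) 𝕜)
    (hCbar : ∀ (i : Fin ρ) (j : Fin n), Cbar i j = (C * A ^ (i : ℕ)) 0 j)
    (Bz : Matrix (Fin (n - ρ)) (Fin n) 𝕜) (hBz : Bz * B = 0)
    (T : Matrix (Fin n) (Fin n) 𝕜)
    (hT : ∀ (i : Fin n) (j : Fin n),
      T i j = if h : (i : ℕ) < n - ρ then Bz ⟨i, h⟩ j
              else Cbar ⟨(i : ℕ) - (n - ρ), by omega⟩ j)
    (hTinv : IsUnit T.det)
    (Seta : Matrix (Fin n) (Fin (n - ρ)) 𝕜)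
    (hSeta : ∀ (i : Fin n) (k : Fin (n - ρ)), Seta i k = T⁻¹ i ⟨(k : ℕ), by omega⟩)
    (Sxi : Matrix (Fin n) (Fin ρ) 𝕜)
    (hSxi : ∀ (i : Fin n) (k : Fin ρ), Sxi i k = T⁻¹ i ⟨n - ρ + (k : ℕ), by omega⟩)
    (Axieta : Matrix (Fin ρ) (Fin (n - ρ)) 𝕜)
    (hAxieta : Axieta = Cbar * A * Seta)
    :
    (∀ i : Fin ρ, (i : ℕ) < ρ - 1 → ∀ k : Fin (n - ρ), Axieta i k = 0) ∧
    (∀ k : Fin (n - ρ), Axieta ⟨ρ - 1, by omega⟩ k = (C * A ^ ρ * Seta) 0 k) := by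

  subst hAxieta
  have hCA : ∀ (i : Fin ρ) (j : Fin n), (Cbar * A) i j = (C * A ^ ((i : ℕ) + 1)) 0 j := by
    intro i j
    rw [pow_succ, ← Matrix.mul_assoc]
    simp [Matrix.mul_apply, hCbar]
  constructor
  · intro i hi k
    have key : ∀ j, (Cbar * A) i j = T ⟨n - ρ + ((i : ℕ) + 1), by omega⟩ j := by
      intro j
      rw [hCA, hT, dif_neg (by simp : ¬ (((⟨n - ρ + ((i : ℕ) + 1), by omega⟩ : Fin n) : ℕ) < n - ρ))]
      rw [hCbar]
      have h2 : ((⟨n - ρ + ((i : ℕ) + 1), by omega⟩ : Fin n) : ℕ) - (n - ρ) = (i : ℕ) + 1 := by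
        simp
      simp [h2]
    have h1 : (Cbar * A * Seta) i k
        = (T * T⁻¹) ⟨n - ρ + ((i : ℕ) + 1), by omega⟩ ⟨(k : ℕ), by omega⟩ := by
      rw [Matrix.mul_apply, Matrix.mul_apply]
      refine Finset.sum_congr rfl fun j _ => ?_
      rw [key, hSeta]
    rw [h1, Matrix.mul_nonsing_inv T hTinv]
    exact Matrix.one_apply_ne (Fin.ne_of_val_ne (by simp; omega))
  · intro k
    have key : ∀ j, (Cbar * A) ⟨ρ - 1, by omega⟩ j = (C * A ^ ρ) 0 j := by
      intro j
      rw [hCA]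
      have h2 : ((⟨ρ - 1, by omega⟩ : Fin ρ) : ℕ) + 1 = ρ := by simp; omega
      rw [h2]
    rw [Matrix.mul_apply, Matrix.mul_apply]
    exact Finset.sum_congr rfl fun j _ => by rw [key, hSeta]
end

section
/- Suppose (A,B,C) has relative degree ρ with 1 ≤ ρ ≤ n. Then the polynomial p(X) ∈ 𝕜[X] given by the unique entry of C * adjugate(X·I_n − A) * B (matrices over 𝕜[X]) has degree exactly n − ρ, and its leading coefficient is ±(C * A^(ρ−1) * B); in particular the system has exactly n − ρ zeros counted with multiplicity (over an algebraically closed field). -/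
/-!
Write `P i = C · adj(X - A) · A^i B`. Since `adj(X - A) (X - A) = χ_A`, these satisfy
`X P i = P (i + 1) + (C A^i B) χ_A`, so the vanishing Markov parameters give
`X^ρ P 0 = P ρ + (C A^(ρ-1) B) χ_A`. Every `P i` has degree `< n` (cofactors of `X - A`
are minors of order `n - 1`), while `χ_A` is monic of degree `n`; hence `P 0` has degree `n - ρ`
and leading coefficient `C A^(ρ-1) B`.
-/

open Matrix Polynomial

theorem Polynomial.natDegree_add_eq_and_leadingCoeff_eq_of_mul_X_pow_eq {R : Type*} [Semiring R]
    {p q f : R[X]} {c : R} {k : ℕ} (hf : f.Monic) (hq : q.degree < f.degree) (hc : c ≠ 0)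
    (h : p * X ^ k = q + C c * f) : p.natDegree + k = f.natDegree ∧ p.leadingCoeff = c := by
  have hcf : (C c * f).degree = f.degree :=
    degree_C_mul_of_mul_ne_zero (by rwa [hf.leadingCoeff, mul_one])
  have hlc : (p * X ^ k).leadingCoeff = c := by
    rw [h, leadingCoeff_add_of_degree_lt (hcf ▸ hq), leadingCoeff_mul_monic hf, leadingCoeff_C]
  have hp : p ≠ 0 := by
    rintro rfl
    exact hc (by simpa using hlc.symm)
  refine ⟨?_, by rwa [leadingCoeff_mul_X_pow] at hlc⟩
  have : Nontrivial R := ⟨⟨c, 0, hc⟩⟩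
  rw [← natDegree_mul_X_pow k hp, h, natDegree_add_eq_right_of_degree_lt (hcf ▸ hq),
    natDegree_eq_natDegree hcf]

namespace Matrix

variable {R : Type*} [CommRing R] {m n l : Type*} [Fintype n] [DecidableEq n]

theorem natDegree_adjugate_charmatrix_apply_le (A : Matrix n n R) (i j : n) :
    ((charmatrix A).adjugate i j).natDegree ≤ Fintype.card n - 1 := by
  obtain ⟨k, hk⟩ : ∃ k, Fintype.card n = k + 1 :=
    Nat.exists_eq_succ_of_ne_zero (Fintype.card_pos_iff.mpr ⟨i⟩).ne'
  let e : n ≃ Fin (k + 1) := (Fintype.equivFin n).trans (finCongr hk)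
  have hreindex :
      (charmatrix A).adjugate i j = (charmatrix (reindex e e A)).adjugate (e i) (e j) := by
    rw [charmatrix_reindex, adjugate_reindex]
    simp
  have hsub : ∀ f g : Fin k → Fin (k + 1), (charmatrix (reindex e e A)).submatrix f g =
      (X : R[X]) • ((1 : Matrix (Fin (k + 1)) (Fin (k + 1)) R).submatrix f g).map C
        + (-(reindex e e A).submatrix f g).map C := by
    intro f g
    ext a b : 1
    by_cases hab : f a = g b <;> simp [one_apply, hab, sub_eq_add_neg]
  rw [hreindex, adjugate_fin_succ_eq_det_submatrix, hsub, hk, Nat.add_sub_cancel]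
  have hsign : ((-1) ^ ((e j : ℕ) + e i) : R[X]) = C ((-1) ^ ((e j : ℕ) + e i)) := by simp
  rw [hsign]
  exact (natDegree_C_mul_le _ _).trans ((natDegree_det_X_add_C_le _ _).trans (by simp))

theorem natDegree_map_mul_adjugate_charmatrix_mul_map_apply_le (A : Matrix n n R)
    (u : Matrix m n R) (v : Matrix n l R) (a : m) (b : l) :
    ((u.map C * (charmatrix A).adjugate * v.map C) a b).natDegree ≤ Fintype.card n - 1 := by
  simp only [mul_apply, map_apply]
  refine natDegree_sum_le_of_forall_le _ _ fun k _ => (natDegree_mul_C_le _ _).trans ?_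
  refine natDegree_sum_le_of_forall_le _ _ fun j _ => (natDegree_C_mul_le _ _).trans ?_
  exact natDegree_adjugate_charmatrix_apply_le A j k

theorem X_smul_map_mul_adjugate_charmatrix_mul_map (A : Matrix n n R) (u : Matrix m n R)
    (v : Matrix n l R) :
    (X : R[X]) • (u.map C * (charmatrix A).adjugate * v.map C) =
      u.map C * (charmatrix A).adjugate * (A * v).map C + A.charpoly • (u * v).map C := by
  have hchar : charmatrix A * v.map C = (X : R[X]) • v.map C - (A * v).map C := by
    rw [charmatrix, Matrix.sub_mul, scalar_apply, ← smul_eq_diagonal_mul, RingHom.mapMatrix_apply,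
      Matrix.map_mul]
  have hadj : u.map C * (charmatrix A).adjugate * charmatrix A * v.map C =
      A.charpoly • (u * v).map C := by
    rw [Matrix.mul_assoc (u.map C), adjugate_mul, Matrix.mul_smul, Matrix.mul_one, Matrix.smul_mul,
      Matrix.map_mul]
    rfl
  rw [← hadj, Matrix.mul_assoc _ (charmatrix A), hchar, Matrix.mul_sub, Matrix.mul_smul]
  abel

end Matrix

theorem stmt12_general {𝕜 : Type*} [Field 𝕜] {n ρ : ℕ} (hρ : 1 ≤ ρ) (hρn : ρ ≤ n)
    (A : Matrix (Fin n) (Fin n) 𝕜) (B : Matrix (Fin n) (Fin 1) 𝕜)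
    (C : Matrix (Fin 1) (Fin n) 𝕜)
    (hrd : ∀ i : ℕ, i + 2 ≤ ρ → C * A ^ i * B = 0)
    (hrd' : C * A ^ (ρ - 1) * B ≠ 0)
    (p : Polynomial 𝕜)
    (hp : p = (C.map Polynomial.C * (Matrix.charmatrix A).adjugate * B.map Polynomial.C) 0 0) :
    p.degree = ((n - ρ : ℕ) : WithBot ℕ) ∧
    (p.leadingCoeff = (C * A ^ (ρ - 1) * B) 0 0 ∨
      p.leadingCoeff = -((C * A ^ (ρ - 1) * B) 0 0)) ∧
    (p.map (algebraMap 𝕜 (AlgebraicClosure 𝕜))).roots.card = n - ρ := by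
  set P : ℕ → 𝕜[X] := fun i =>
    (C.map Polynomial.C * (charmatrix A).adjugate * (A ^ i * B).map Polynomial.C) 0 0
  have hrec : ∀ i, P i * X = P (i + 1) + Polynomial.C ((C * A ^ i * B) 0 0) * A.charpoly := by
    intro i
    have h := congrFun₂ (X_smul_map_mul_adjugate_charmatrix_mul_map A C (A ^ i * B)) 0 0
    rw [← Matrix.mul_assoc A, ← pow_succ', ← Matrix.mul_assoc C] at h
    simp only [Matrix.smul_apply, Matrix.add_apply, map_apply, smul_eq_mul] at h
    rw [mul_comm _ X, mul_comm (Polynomial.C _)]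
    exact h
  have hshift : ∀ i, i + 1 ≤ ρ → P 0 * X ^ i = P i := by
    intro i
    induction i with
    | zero => simp
    | succ i ih =>
      intro hi
      rw [pow_succ, ← mul_assoc, ih (by omega), hrec, hrd i hi]
      simp
  have hlead : (C * A ^ (ρ - 1) * B) 0 0 ≠ 0 := fun h =>
    hrd' (Matrix.ext fun i j => by rwa [Subsingleton.elim i 0, Subsingleton.elim j 0])
  have hp0 : p = P 0 := by simp [hp, P]
  have hkey : p * X ^ ρ = P ρ + Polynomial.C ((C * A ^ (ρ - 1) * B) 0 0) * A.charpoly := by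
    obtain ⟨r, rfl⟩ := Nat.exists_eq_add_of_le' hρ
    rw [hp0, pow_succ, ← mul_assoc, hshift r le_rfl, hrec, Nat.add_sub_cancel]
  have hPρ : (P ρ).degree < A.charpoly.degree := by
    refine degree_lt_degree
      ((natDegree_map_mul_adjugate_charmatrix_mul_map_apply_le _ _ _ _ _).trans_lt ?_)
    rw [charpoly_natDegree_eq_dim, Fintype.card_fin]
    omega
  obtain ⟨hdeg, hlc⟩ := natDegree_add_eq_and_leadingCoeff_eq_of_mul_X_pow_eq
    A.charpoly_monic hPρ hlead hkey
  rw [charpoly_natDegree_eq_dim, Fintype.card_fin] at hdeg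
  have hnat : p.natDegree = n - ρ := by omega
  have hp_ne : p ≠ 0 := fun h => hlead (by simpa [h] using hlc.symm)
  refine ⟨by rw [degree_eq_natDegree hp_ne, hnat], Or.inl hlc, ?_⟩
  rw [IsAlgClosed.card_roots_eq_natDegree, natDegree_map, hnat]

/-- If `(A, B, C)` has relative degree `ρ` with `1 ≤ ρ ≤ n`, the
numerator polynomial `p(X) = C * adj(X I - A) * B` has degree exactly `n - ρ` with leading
coefficient `±(C * A^(ρ-1) * B)`; in particular the system has exactly `n - ρ` zeros
counted with multiplicity over an algebraic closure. -/
theorem stmt12 {𝕜 : Type*} [Field 𝕜] {n ρ : ℕ} (hn : 1 ≤ n) (hρ : 1 ≤ ρ) (hρn : ρ ≤ n)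
    (A : Matrix (Fin n) (Fin n) 𝕜) (B : Matrix (Fin n) (Fin 1) 𝕜)
    (C : Matrix (Fin 1) (Fin n) 𝕜)
    (hrd : ∀ i : ℕ, i + 2 ≤ ρ → C * A ^ i * B = 0)
    (hrd' : C * A ^ (ρ - 1) * B ≠ 0)
    (p : Polynomial 𝕜)
    (hp : p = (C.map Polynomial.C * (Matrix.charmatrix A).adjugate * B.map Polynomial.C) 0 0) :
    p.degree = ((n - ρ : ℕ) : WithBot ℕ) ∧
    (p.leadingCoeff = (C * A ^ (ρ - 1) * B) 0 0 ∨
      p.leadingCoeff = -((C * A ^ (ρ - 1) * B) 0 0)) ∧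
    (p.map (algebraMap 𝕜 (AlgebraicClosure 𝕜))).roots.card = n - ρ :=
  stmt12_general hρ hρn A B C hrd hrd' p hp
end

section
/- Bordered determinant identity: let R be a commutative ring, n ≥ 1, M an n×n matrix over R, b an n×1 column matrix, and c a 1×n row matrix. Then the determinant of the (n+1)×(n+1) block matrix [[M, b], [c, 0]] (formed with fromBlocks, the (n+1,n+1) entry being the 1×1 zero matrix) equals −(c * adjugate(M) * b), i.e., minus the unique entry of the 1×1 matrix c·adjugate(M)·b. -/
/-!
Right-multiplying `[[M, b], [c, 0]]` by `[[adj M, -adj M * b], [0, det M]]` gives a block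
triangular matrix with diagonal blocks `det M • 1` and `-(c * adj M * b)`; taking determinants,
`det [[M, b], [c, 0]] * det M ^ n = det M ^ n * -(c * adj M * b)`. This cancels when `det M` is
a non-zero-divisor. The general case follows by applying this to `M + X • 1` over `R[X]`, whose
determinant is monic, and evaluating at `X = 0`.
-/

open Matrix Polynomial

namespace Matrix

variable {m ι R : Type*} [Fintype m] [DecidableEq m] [Fintype ι] [DecidableEq ι]
  [CommRing R]

theorem fromBlocks_zero₂₂_mul_fromBlocks_adjugate (M : Matrix m m R) (b : Matrix m ι R)
    (c : Matrix ι m R) :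
    fromBlocks M b c 0 * fromBlocks M.adjugate (-(M.adjugate * b)) 0 (M.det • 1) =
      fromBlocks (M.det • 1) 0 (c * M.adjugate) (-(c * M.adjugate * b)) := by
  rw [fromBlocks_multiply, mul_adjugate, Matrix.mul_neg, ← Matrix.mul_assoc, mul_adjugate,
    Matrix.mul_neg, ← Matrix.mul_assoc]
  simp

theorem det_fromBlocks_zero₂₂_of_isLeftRegular [Unique ι] (M : Matrix m m R) (b : Matrix m ι R)
    (c : Matrix ι m R) (hM : IsLeftRegular M.det) :
    (fromBlocks M b c 0).det = -(c * M.adjugate * b) default default := by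
  have hdet : M.adjugate.det * M.det = M.det ^ Fintype.card m := by
    rw [← det_mul, adjugate_mul, det_smul, det_one, mul_one]
  have h := congrArg det (fromBlocks_zero₂₂_mul_fromBlocks_adjugate M b c)
  simp only [det_mul, det_fromBlocks_zero₂₁, det_fromBlocks_zero₁₂, det_smul, det_one, mul_one,
    det_unique (M.det • 1 : Matrix ι ι R), det_unique (-(c * M.adjugate * b)), smul_apply,
    one_apply_eq, smul_eq_mul, neg_apply, hdet] at h
  rw [mul_comm] at h
  exact hM.pow _ h

theorem det_fromBlocks_zero₂₂ [Unique ι] (M : Matrix m m R) (b : Matrix m ι R)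
    (c : Matrix ι m R) :
    (fromBlocks M b c 0).det = -(c * M.adjugate * b) default default := by
  have hM : IsLeftRegular (M.map C + (X : R[X]) • 1).det := by
    refine (Monic.isRegular ?_).left
    rw [Monic.def, add_comm, leadingCoeff_det_X_one_add_C M]
  have h := congrArg (evalRingHom 0)
    (det_fromBlocks_zero₂₂_of_isLeftRegular _ (b.map C) (c.map C) hM)
  have hM0 : (M.map C + (X : R[X]) • 1).map (eval 0) = M := by ext; simp
  have hb0 : (b.map C).map (eval 0) = b := by ext; simp
  have hc0 : (c.map C).map (eval 0) = c := by ext; simp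
  rw [RingHom.map_det, RingHom.mapMatrix_apply, fromBlocks_map, map_neg,
    ← Matrix.map_apply (f := evalRingHom 0), Matrix.map_mul, Matrix.map_mul,
    ← RingHom.mapMatrix_apply (evalRingHom 0) (adjugate _), RingHom.map_adjugate,
    RingHom.mapMatrix_apply] at h
  simpa only [coe_evalRingHom, hM0, hb0, hc0, Matrix.map_zero _ eval_zero] using h

end Matrix

theorem stmt14_general {R : Type*} [CommRing R] {n : ℕ}
    (M : Matrix (Fin n) (Fin n) R) (b : Matrix (Fin n) (Fin 1) R)
    (c : Matrix (Fin 1) (Fin n) R) :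
    (Matrix.fromBlocks M b c (0 : Matrix (Fin 1) (Fin 1) R)).det =
      -((c * M.adjugate * b) 0 0) := by
  rw [det_fromBlocks_zero₂₂, Fin.default_eq_zero]

/-- **bordered determinant identity.** For a commutative ring `R`, an
`n × n` matrix `M`, a column `b` and a row `c`, the determinant of the block matrix
`[[M, b], [c, 0]]` equals `-(c * adjugate(M) * b)`. -/
theorem stmt14 {R : Type*} [CommRing R] {n : ℕ} (hn : 1 ≤ n)
    (M : Matrix (Fin n) (Fin n) R) (b : Matrix (Fin n) (Fin 1) R)
    (c : Matrix (Fin 1) (Fin n) R) :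
    (Matrix.fromBlocks M b c (0 : Matrix (Fin 1) (Fin 1) R)).det =
      -((c * M.adjugate * b) 0 0) :=
  stmt14_general M b c
end

section
/- Theorem (square MIMO): let 𝕜 be a field, m ≥ 1, and let A be n×n, B be n×m, C be m×n over 𝕜. Suppose each output i (0 ≤ i ≤ m−1) has relative degree ρ_i ≥ 1, meaning (row i of C) * A^j * B = 0 (1×m) for all 0 ≤ j ≤ ρ_i − 2, and the m×m decoupling matrix β whose i-th row is (row i of C) * A^(ρ_i − 1) * B is invertible. Set ρ = ρ_0 + ⋯ + ρ_{m−1} (assume ρ ≤ n) and l_z = n − ρ; let C̄ be the ρ×n matrix obtained by stacking, for each i, the rows (row i of C) * A^j for 0 ≤ j ≤ ρ_i − 1; fix B_z : Matrix (Fin l_z) (Fin n) 𝕜 with B_z * B = 0 such that T = [B_z; C̄] (n×n) is invertible, let S_η be the first l_z columns of T⁻¹, and A_η = B_z * A * S_η. Then for every λ ∈ 𝕜, the (n+m)×(n+m) Rosenbrock matrix [[λ·I − A, B], [C, 0]] has rank strictly less than n+m if and only if det(λ·I_{l_z} − A_η) = 0; i.e., the invariant zeros of the square MIMO system (A,B,C)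 with D = 0 are exactly the eigenvalues of A_η. -/
/-!
In the coordinates `η = B_z x`, `ξ = C̄ x` given by `T`, a kernel vector `(x, u)` of the
Rosenbrock matrix has `ξ = 0`: from `A x = λ x + B u` and `C x = 0`, the relative-degree
conditions make the `Cᵢ Aʲ x` vanish one after the other. Hence `x = S_η η`, and applying
`B_z`, which kills `B`, gives `A_η η = λ η`; here `η ≠ 0`, since `η = 0` forces `x = 0`, then
`B u = 0`, so `β u = 0` and `u = 0`. Conversely, for an eigenvector `η` of `A_η`, the state
`x = S_η η` with the input `u = β⁻¹ (Cᵢ A^{ρᵢ} x)ᵢ`, which cancels the `ρᵢ`-th derivative of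
each output, lies in the kernel of the Rosenbrock matrix.
-/

open Matrix

namespace Matrix

theorem rank_lt_card_iff_det_eq_zero {K n : Type*} [Field K] [Fintype n] [DecidableEq n]
    (M : Matrix n n K) : M.rank < Fintype.card n ↔ M.det = 0 := by
  refine ⟨fun h => by_contra fun hd => h.ne (rank_of_det_ne_zero hd),
    fun hd => M.rank_le_card_width.lt_of_ne fun h => ?_⟩
  have hrange : LinearMap.range M.mulVecLin = ⊤ :=
    Submodule.eq_top_of_finrank_eq (by simpa [rank] using h)
  have hM : IsUnit M := mulVec_surjective_iff_isUnit.1 (LinearMap.range_eq_top.1 hrange)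
  exact ((isUnit_iff_isUnit_det M).1 hM).ne_zero hd

section Partitioned

variable {R n ι κ : Type*} [CommRing R] [Fintype n] {P : Matrix ι n R} {Q : Matrix κ n R}
  {S : Matrix n ι R} {S' : Matrix n κ R}

theorem mul_eq_one_and_mul_eq_zero_of_fromRows_mul_fromCols_eq_one [DecidableEq ι]
    [DecidableEq κ] (h : fromRows P Q * fromCols S S' = 1) : P * S = 1 ∧ Q * S = 0 := by
  rw [fromRows_mul_fromCols, ← fromBlocks_one, fromBlocks_inj] at h
  exact ⟨h.1, h.2.2.1⟩

theorem mulVec_add_mulVec_eq_self_of_fromCols_mul_fromRows_eq_one [Fintype ι] [Fintype κ]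
    [DecidableEq n] (h : fromCols S S' * fromRows P Q = 1) (x : n → R) :
    S *ᵥ (P *ᵥ x) + S' *ᵥ (Q *ᵥ x) = x := by
  rw [fromCols_mul_fromRows] at h
  rw [mulVec_mulVec, mulVec_mulVec, ← add_mulVec, h, one_mulVec]

theorem exists_complement_of_isUnit_det_submatrix_fromRows [Fintype ι] [Fintype κ]
    [DecidableEq ι] [DecidableEq κ] [DecidableEq n] (e : ι ⊕ κ ≃ n) {T : Matrix n n R}
    (hT : T = (fromRows P Q).submatrix e.symm id) (hTinv : IsUnit T.det)
    (hS : ∀ i k, S i k = T⁻¹ i (e (Sum.inl k))) :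
    ∃ S' : Matrix n κ R,
      P * S = 1 ∧ Q * S = 0 ∧ ∀ x, S *ᵥ (P *ᵥ x) + S' *ᵥ (Q *ᵥ x) = x := by
  set U := T⁻¹.submatrix id e
  have hU : fromCols S U.toCols₂ = U := by
    rw [show S = U.toCols₁ from ext hS, fromCols_toCols]
  have hPQ : fromRows P Q = T.submatrix e id := by
    rw [hT, submatrix_submatrix]
    simp
  have h₁ : fromRows P Q * U = 1 := by
    rw [hPQ, ← submatrix_mul _ _ _ _ _ Function.bijective_id, mul_nonsing_inv _ hTinv,
      submatrix_one_equiv]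
  have h₂ : U * fromRows P Q = 1 := by
    rw [hPQ, submatrix_mul_equiv, nonsing_inv_mul _ hTinv, submatrix_id_id]
  rw [← hU] at h₁ h₂
  obtain ⟨hPS, hQS⟩ := mul_eq_one_and_mul_eq_zero_of_fromRows_mul_fromCols_eq_one h₁
  exact ⟨U.toCols₂, hPS, hQS, mulVec_add_mulVec_eq_self_of_fromCols_mul_fromRows_eq_one h₂⟩

end Partitioned

theorem smul_one_sub_mulVec_eq_zero_iff {R n : Type*} [CommRing R] [Fintype n] [DecidableEq n]
    (M : Matrix n n R) (c : R) (v : n → R) : (c • 1 - M) *ᵥ v = 0 ↔ M *ᵥ v = c • v := by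
  rw [sub_mulVec, smul_mulVec, one_mulVec, sub_eq_zero, eq_comm]

theorem dotProduct_vecMul_eq_of_mulVec_eq {R n m : Type*} [CommRing R] [Fintype n] [Fintype m]
    {A : Matrix n n R} {B : Matrix n m R} {lam : R} {x : n → R} {u : m → R}
    (hx : A *ᵥ x = lam • x + B *ᵥ u) (w : n → R) :
    (w ᵥ* A) ⬝ᵥ x = lam * (w ⬝ᵥ x) + (w ᵥ* B) ⬝ᵥ u := by
  rw [← dotProduct_mulVec, hx, dotProduct_add, dotProduct_smul, smul_eq_mul, dotProduct_mulVec]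

section Stacked

variable {R n m : Type*} [CommRing R] [Fintype n] [DecidableEq n] {A : Matrix n n R}
  {C : Matrix m n R} {ρf : m → ℕ} {x : n → R} {Cbar : Matrix ((i : m) × Fin (ρf i)) n R}

theorem mulVec_eq_zero_iff_forall_vecMul_pow_dotProduct
    (hCbar : ∀ p, Cbar p = C p.1 ᵥ* A ^ (p.2 : ℕ)) :
    Cbar *ᵥ x = 0 ↔ ∀ i, ∀ j < ρf i, (C i ᵥ* A ^ j) ⬝ᵥ x = 0 := by
  simp only [funext_iff, Pi.zero_apply, Sigma.forall, Fin.forall_iff]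
  exact forall_congr' fun i => forall₂_congr fun j hj => by rw [← hCbar ⟨i, j, hj⟩]; rfl

theorem mulVec_eq_zero_of_stacked_mulVec_eq_zero (hρf : ∀ i, 1 ≤ ρf i)
    (hCbar : ∀ p, Cbar p = C p.1 ᵥ* A ^ (p.2 : ℕ)) (hx : Cbar *ᵥ x = 0) : C *ᵥ x = 0 := by
  funext i
  change C i ⬝ᵥ x = 0
  simpa only [pow_zero, vecMul_one] using
    (mulVec_eq_zero_iff_forall_vecMul_pow_dotProduct hCbar).1 hx i 0 (hρf i)

end Stacked

section RelativeDegree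

variable {R n m : Type*} [CommRing R] [Fintype n] [Fintype m] [DecidableEq n] {A : Matrix n n R}
  {B : Matrix n m R} {C : Matrix m n R} {ρf : m → ℕ} {lam : R} {x : n → R} {u : m → R}

theorem fromBlocks_mulVec_sumElim_eq_zero_iff :
    fromBlocks (lam • 1 - A) B C 0 *ᵥ Sum.elim x u = 0 ↔
      A *ᵥ x = lam • x + B *ᵥ u ∧ C *ᵥ x = 0 := by
  rw [fromBlocks_mulVec, ← Sum.elim_zero_zero, Sum.elim_eq_iff]
  simp [sub_mulVec, smul_mulVec, sub_add_eq_add_sub, sub_eq_zero, eq_comm]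

theorem vecMul_pow_dotProduct_eq_zero (hrd : ∀ i j, j + 2 ≤ ρf i → C i ᵥ* (A ^ j * B) = 0)
    (hx : A *ᵥ x = lam • x + B *ᵥ u) (hC : C *ᵥ x = 0) (i : m) :
    ∀ j < ρf i, (C i ᵥ* A ^ j) ⬝ᵥ x = 0
  | 0, _ => by rw [pow_zero, vecMul_one]; exact congrFun hC i
  | j + 1, hj => by
    rw [pow_succ, ← vecMul_vecMul, dotProduct_vecMul_eq_of_mulVec_eq hx,
      vecMul_pow_dotProduct_eq_zero hrd hx hC i j (by omega), vecMul_vecMul, hrd i j (by omega),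
      mul_zero, zero_dotProduct, add_zero]

theorem eq_zero_of_mulVec_eq_zero_of_decoupling [DecidableEq m] {β : Matrix m m R}
    (hβ : ∀ i, β i = C i ᵥ* (A ^ (ρf i - 1) * B)) (hβinv : IsUnit β.det)
    (hu : B *ᵥ u = 0) : u = 0 := by
  have hβu : β *ᵥ u = 0 := funext fun i => by
    change β i ⬝ᵥ u = 0
    rw [hβ i, ← dotProduct_mulVec, ← mulVec_mulVec, hu, mulVec_zero, dotProduct_zero]
  rw [← one_mulVec u, ← nonsing_inv_mul β hβinv, ← mulVec_mulVec, hβu, mulVec_zero]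

theorem zeroDynamics_of_mulVec_eq {ι : Type*} [Fintype ι]
    {Bz : Matrix ι n R} {Cbar : Matrix ((i : m) × Fin (ρf i)) n R}
    {S : Matrix n ι R} {S' : Matrix n ((i : m) × Fin (ρf i)) R}
    (hrd : ∀ i j, j + 2 ≤ ρf i → C i ᵥ* (A ^ j * B) = 0)
    (hCbar : ∀ p, Cbar p = C p.1 ᵥ* A ^ (p.2 : ℕ)) (hBz : Bz * B = 0)
    (hrecon : ∀ x, S *ᵥ (Bz *ᵥ x) + S' *ᵥ (Cbar *ᵥ x) = x)
    (hx : A *ᵥ x = lam • x + B *ᵥ u) (hC : C *ᵥ x = 0) :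
    S *ᵥ (Bz *ᵥ x) = x ∧ (Bz * A * S) *ᵥ (Bz *ᵥ x) = lam • (Bz *ᵥ x) := by
  have hCbarx : Cbar *ᵥ x = 0 := (mulVec_eq_zero_iff_forall_vecMul_pow_dotProduct hCbar).2
    (vecMul_pow_dotProduct_eq_zero hrd hx hC)
  have hSx : S *ᵥ (Bz *ᵥ x) = x := by
    simpa only [hCbarx, mulVec_zero, add_zero] using hrecon x
  refine ⟨hSx, ?_⟩
  rw [← mulVec_mulVec, hSx, ← mulVec_mulVec, hx, mulVec_add, mulVec_mulVec, hBz, zero_mulVec,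
    add_zero, mulVec_smul]

theorem vecMul_pow_dotProduct_mulVec_eq [DecidableEq m] {β : Matrix m m R}
    (hrd : ∀ i j, j + 2 ≤ ρf i → C i ᵥ* (A ^ j * B) = 0)
    (hβ : ∀ i, β i = C i ᵥ* (A ^ (ρf i - 1) * B)) (hβinv : IsUnit β.det)
    (hξ : ∀ i, ∀ j < ρf i, (C i ᵥ* A ^ j) ⬝ᵥ x = 0) (i : m) (j : ℕ) (hj : j < ρf i) :
    (C i ᵥ* A ^ j) ⬝ᵥ (A *ᵥ x) =
      (C i ᵥ* A ^ j) ⬝ᵥ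
        (lam • x + B *ᵥ (β⁻¹ *ᵥ fun i => (C i ᵥ* A ^ ρf i) ⬝ᵥ x)) := by
  rw [dotProduct_mulVec, vecMul_vecMul, ← pow_succ, dotProduct_add, dotProduct_smul, hξ i j hj,
    smul_zero, zero_add, dotProduct_mulVec, vecMul_vecMul]
  rcases (show j + 1 ≤ ρf i from hj).lt_or_eq with hlt | heq
  · rw [hξ i _ hlt, hrd i j hlt, zero_dotProduct]
  · rw [heq, show j = ρf i - 1 by omega, ← hβ i]
    change _ = (β *ᵥ (β⁻¹ *ᵥ _)) i
    rw [mulVec_mulVec, mul_nonsing_inv _ hβinv, one_mulVec]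

theorem mulVec_eq_of_zeroDynamics [DecidableEq m] {ι : Type*} [Fintype ι]
    {β : Matrix m m R} {Bz : Matrix ι n R} {Cbar : Matrix ((i : m) × Fin (ρf i)) n R}
    {S : Matrix n ι R} {S' : Matrix n ((i : m) × Fin (ρf i)) R}
    (hrd : ∀ i j, j + 2 ≤ ρf i → C i ᵥ* (A ^ j * B) = 0)
    (hβ : ∀ i, β i = C i ᵥ* (A ^ (ρf i - 1) * B)) (hβinv : IsUnit β.det)
    (hCbar : ∀ p, Cbar p = C p.1 ᵥ* A ^ (p.2 : ℕ)) (hBz : Bz * B = 0)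
    (hrecon : ∀ x, S *ᵥ (Bz *ᵥ x) + S' *ᵥ (Cbar *ᵥ x) = x)
    (hCbarx : Cbar *ᵥ x = 0) (hBzx : Bz *ᵥ (A *ᵥ x) = lam • (Bz *ᵥ x)) :
    A *ᵥ x = lam • x + B *ᵥ (β⁻¹ *ᵥ fun i => (C i ᵥ* A ^ ρf i) ⬝ᵥ x) := by
  rw [← hrecon (A *ᵥ x), ← hrecon (lam • x + _), mulVec_add Bz, mulVec_mulVec _ Bz B, hBz,
    zero_mulVec, add_zero, mulVec_smul, hBzx]
  congr 2
  ext ⟨i, j⟩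
  change Cbar _ ⬝ᵥ _ = Cbar _ ⬝ᵥ _
  rw [hCbar]
  exact vecMul_pow_dotProduct_mulVec_eq hrd hβ hβinv
    ((mulVec_eq_zero_iff_forall_vecMul_pow_dotProduct hCbar).1 hCbarx) i j j.isLt

end RelativeDegree

end Matrix

theorem stmt16_general {𝕜 : Type*} [Field 𝕜] {n m : ℕ}
    (A : Matrix (Fin n) (Fin n) 𝕜) (B : Matrix (Fin n) (Fin m) 𝕜)
    (C : Matrix (Fin m) (Fin n) 𝕜)
    (ρf : Fin m → ℕ) (hρf : ∀ i, 1 ≤ ρf i)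
    (hrd : ∀ (i : Fin m) (j : ℕ), j + 2 ≤ ρf i → C i ᵥ* (A ^ j * B) = 0)
    (β : Matrix (Fin m) (Fin m) 𝕜)
    (hβ : ∀ i : Fin m, β i = C i ᵥ* (A ^ (ρf i - 1) * B))
    (hβinv : IsUnit β.det)
    (Cbar : Matrix ((i : Fin m) × Fin (ρf i)) (Fin n) 𝕜)
    (hCbar : ∀ p : (i : Fin m) × Fin (ρf i), Cbar p = C p.1 ᵥ* A ^ (p.2 : ℕ))
    (Bz : Matrix (Fin (n - ∑ i, ρf i)) (Fin n) 𝕜) (hBz : Bz * B = 0)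
    (e : (Fin (n - ∑ i, ρf i) ⊕ ((i : Fin m) × Fin (ρf i))) ≃ Fin n)
    (T : Matrix (Fin n) (Fin n) 𝕜)
    (hT : T = (Matrix.fromRows Bz Cbar).submatrix e.symm id)
    (hTinv : IsUnit T.det)
    (Seta : Matrix (Fin n) (Fin (n - ∑ i, ρf i)) 𝕜)
    (hSeta : ∀ (i : Fin n) (k : Fin (n - ∑ i, ρf i)), Seta i k = T⁻¹ i (e (Sum.inl k)))
    (Aeta : Matrix (Fin (n - ∑ i, ρf i)) (Fin (n - ∑ i, ρf i)) 𝕜)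
    (hAeta : Aeta = Bz * A * Seta) :
    ∀ lam : 𝕜,
      (Matrix.fromBlocks (lam • (1 : Matrix (Fin n) (Fin n) 𝕜) - A) B C
        (0 : Matrix (Fin m) (Fin m) 𝕜)).rank < n + m ↔
      (lam • (1 : Matrix (Fin (n - ∑ i, ρf i)) (Fin (n - ∑ i, ρf i)) 𝕜) - Aeta).det = 0 := by
  intro lam
  obtain ⟨S', hBzS, hCbarS, hrecon⟩ :=
    exists_complement_of_isUnit_det_submatrix_fromRows e hT hTinv hSeta
  rw [show n + m = Fintype.card (Fin n ⊕ Fin m) by simp, rank_lt_card_iff_det_eq_zero,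
    ← exists_mulVec_eq_zero_iff, ← exists_mulVec_eq_zero_iff, hAeta]
  simp_rw [smul_one_sub_mulVec_eq_zero_iff]
  constructor
  · rintro ⟨v, hv, hMv⟩
    rw [← Sum.elim_comp_inl_inr v] at hv hMv
    obtain ⟨hx, hC⟩ := fromBlocks_mulVec_sumElim_eq_zero_iff.1 hMv
    obtain ⟨hSx, hηeig⟩ :=
      zeroDynamics_of_mulVec_eq hrd hCbar hBz hrecon hx hC
    refine ⟨_, fun hη => hv ?_, hηeig⟩
    have hx0 : v ∘ Sum.inl = 0 := by rw [← hSx, hη, mulVec_zero]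
    have hu0 := eq_zero_of_mulVec_eq_zero_of_decoupling hβ hβinv (by simpa [hx0] using hx.symm)
    rw [hx0, hu0, Sum.elim_zero_zero]
  · rintro ⟨η, hη, hηeig⟩
    have hBzx : Bz *ᵥ (Seta *ᵥ η) = η := by rw [mulVec_mulVec, hBzS, one_mulVec]
    have hCbarx : Cbar *ᵥ (Seta *ᵥ η) = 0 := by rw [mulVec_mulVec, hCbarS, zero_mulVec]
    refine ⟨Sum.elim (Seta *ᵥ η) _, fun h => hη ?_, fromBlocks_mulVec_sumElim_eq_zero_iff.2
      ⟨mulVec_eq_of_zeroDynamics hrd hβ hβinv hCbar hBz hrecon hCbarx ?_, ?_⟩⟩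
    · rw [← hBzx, show Seta *ᵥ η = 0 from congrArg (· ∘ Sum.inl) h, mulVec_zero]
    · rw [hBzx, mulVec_mulVec η A, mulVec_mulVec η Bz, ← Matrix.mul_assoc, hηeig]
    · exact mulVec_eq_zero_of_stacked_mulVec_eq_zero hρf hCbar hCbarx

/-- **square MIMO.** Suppose each output `i` of the square MIMO system
`(A, B, C)` (with `D = 0`) has relative degree `ρ i ≥ 1`: row `i` of `C * A ^ j * B`
vanishes for `j ≤ ρ i - 2`, and the decoupling matrix `β` with rows `Cᵢ * A ^ (ρ i - 1) * B`
is invertible.  With `ρ = ∑ ρ i ≤ n`, `l_z = n - ρ`, `C̄` stacking the rows `Cᵢ * A ^ j`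
(`0 ≤ j ≤ ρ i - 1`), `B_z` with `B_z * B = 0` such that `T = [B_z; C̄]` is invertible,
`S_η` the columns of `T⁻¹` matching `B_z`, and `A_η = B_z * A * S_η`: for every `λ`, the
Rosenbrock matrix `[[λ I - A, B], [C, 0]]` has rank `< n + m` iff `det(λ I - A_η) = 0`,
i.e., the invariant zeros of the system are exactly the eigenvalues of `A_η`. -/
theorem stmt16 {𝕜 : Type*} [Field 𝕜] {n m : ℕ} (hm : 1 ≤ m)
    (A : Matrix (Fin n) (Fin n) 𝕜) (B : Matrix (Fin n) (Fin m) 𝕜)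
    (C : Matrix (Fin m) (Fin n) 𝕜)
    (ρf : Fin m → ℕ) (hρf : ∀ i, 1 ≤ ρf i)
    (hrd : ∀ (i : Fin m) (j : ℕ), j + 2 ≤ ρf i → C i ᵥ* (A ^ j * B) = 0)
    (β : Matrix (Fin m) (Fin m) 𝕜)
    (hβ : ∀ i : Fin m, β i = C i ᵥ* (A ^ (ρf i - 1) * B))
    (hβinv : IsUnit β.det)
    (hρn : ∑ i, ρf i ≤ n)
    (Cbar : Matrix ((i : Fin m) × Fin (ρf i)) (Fin n) 𝕜)
    (hCbar : ∀ p : (i : Fin m) × Fin (ρf i), Cbar p = C p.1 ᵥ* A ^ (p.2 : ℕ))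
    (Bz : Matrix (Fin (n - ∑ i, ρf i)) (Fin n) 𝕜) (hBz : Bz * B = 0)
    (e : (Fin (n - ∑ i, ρf i) ⊕ ((i : Fin m) × Fin (ρf i))) ≃ Fin n)
    (T : Matrix (Fin n) (Fin n) 𝕜)
    (hT : T = (Matrix.fromRows Bz Cbar).submatrix e.symm id)
    (hTinv : IsUnit T.det)
    (Seta : Matrix (Fin n) (Fin (n - ∑ i, ρf i)) 𝕜)
    (hSeta : ∀ (i : Fin n) (k : Fin (n - ∑ i, ρf i)), Seta i k = T⁻¹ i (e (Sum.inl k)))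
    (Aeta : Matrix (Fin (n - ∑ i, ρf i)) (Fin (n - ∑ i, ρf i)) 𝕜)
    (hAeta : Aeta = Bz * A * Seta) :
    ∀ lam : 𝕜,
      (Matrix.fromBlocks (lam • (1 : Matrix (Fin n) (Fin n) 𝕜) - A) B C
        (0 : Matrix (Fin m) (Fin m) 𝕜)).rank < n + m ↔
      (lam • (1 : Matrix (Fin (n - ∑ i, ρf i)) (Fin (n - ∑ i, ρf i)) 𝕜) - Aeta).det = 0 :=
  stmt16_general A B C ρf hρf hrd β hβ hβinv Cbar hCbar Bz hBz e T hT hTinv Seta hSeta Aeta hAeta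
end
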